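/- Let k ∈ ℝ, κ > 0, and ρ, σ, ρ₁, σ₁ ∈ ℝ satisfy 1 − σ − σ₁ − σk²/κ ≥ 0 and ρ + ρ₁ + σ + σ₁ + (1+ρ+σ)k²/κ ≥ 0. Define the complex numbers c = 1 + √(1 − σ − σ₁ − σk²/κ), a = (1/2)·[ c + i·( √(ρ + ρ₁ + σ + σ₁ + (1+ρ+σ)k²/κ) + k/√κ ) ], and b = (1/2)·[ c + i·( √(ρ + ρ₁ + σ + σ₁ + (1+ρ+σ)k²/κ) − k/√κ ) ]. Then (a−b)² = −k²/κ, 2c − c² = σ·[1−(a−b)²] + σ₁, and 2·[c(a+b−1) − 2ab] = ρ·[1−(a−b)²] + ρ₁. -/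

import Mathlib

/-! Write `c = 1 + S`, `a = (c + i(T + U))/2` and `b = (c + i(T − U))/2` with real `S`, `T`, `U`,
where `U = k/√κ`. Then `a − b = iU` and `a + b = c + iT`, so `(a − b)² = −U²`, `2c − c² = 1 − S²`,
and, by `4ab = (a + b)² − (a − b)²`, `2[c(a + b − 1) − 2ab] = T² + (a − b)² − (2c − c²)`.
Substituting the values of `S²`, `T²` and `U²` gives the three identities. -/

open Complex

theorem ofReal_sqrt_sq {x : ℝ} (hx : 0 ≤ x) : ((√x : ℝ) : ℂ) ^ 2 = x := by
  rw [← ofReal_pow, Real.sq_sqrt hx]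

theorem two_mul_sub_eq_of_add_eq {a b c t : ℂ} (h : a + b = c + I * t) :
    2 * (c * (a + b - 1) - 2 * a * b) = t ^ 2 + (a - b) ^ 2 - (2 * c - c ^ 2) := by
  linear_combination (2 * c - (a + b) - (c + I * t)) * h - t ^ 2 * I_sq

open Complex in
theorem stmt_4 (k κ ρ σ ρ₁ σ₁ : ℝ) (hκ : 0 < κ)
    (h1 : 0 ≤ 1 - σ - σ₁ - σ * k ^ 2 / κ)
    (h2 : 0 ≤ ρ + ρ₁ + σ + σ₁ + (1 + ρ + σ) * k ^ 2 / κ)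
    (a b c : ℂ)
    (hc : c = 1 + (Real.sqrt (1 - σ - σ₁ - σ * k ^ 2 / κ) : ℝ))
    (ha : a = (1 / 2) * (c + Complex.I *
      ((Real.sqrt (ρ + ρ₁ + σ + σ₁ + (1 + ρ + σ) * k ^ 2 / κ) : ℝ)
        + (k / Real.sqrt κ : ℝ))))
    (hb : b = (1 / 2) * (c + Complex.I *
      ((Real.sqrt (ρ + ρ₁ + σ + σ₁ + (1 + ρ + σ) * k ^ 2 / κ) : ℝ)
        - (k / Real.sqrt κ : ℝ)))) :
    (a - b) ^ 2 = -(k ^ 2 / κ : ℝ) ∧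
    2 * c - c ^ 2 = (σ : ℂ) * (1 - (a - b) ^ 2) + (σ₁ : ℂ) ∧
    2 * (c * (a + b - 1) - 2 * a * b) = (ρ : ℂ) * (1 - (a - b) ^ 2) + (ρ₁ : ℂ) := by
  set S := Real.sqrt (1 - σ - σ₁ - σ * k ^ 2 / κ)
  set T := Real.sqrt (ρ + ρ₁ + σ + σ₁ + (1 + ρ + σ) * k ^ 2 / κ)
  set U := k / Real.sqrt κ
  have hU : (U : ℂ) ^ 2 = (k ^ 2 / κ : ℝ) := by
    rw [← ofReal_pow, div_pow, Real.sq_sqrt hκ.le]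
  have hdisc : (a - b) ^ 2 = -(k ^ 2 / κ : ℝ) := by
    rw [show a - b = I * U by rw [ha, hb]; ring, mul_pow, I_sq, hU, neg_one_mul]
  have hquad : 2 * c - c ^ 2 = 1 - (S : ℂ) ^ 2 := by rw [hc]; ring
  have hsum : a + b = c + I * T := by rw [ha, hb]; ring
  refine ⟨hdisc, ?_, ?_⟩
  · rw [hquad, hdisc, ofReal_sqrt_sq h1]
    push_cast
    ring
  · rw [two_mul_sub_eq_of_add_eq hsum, hquad, hdisc, ofReal_sqrt_sq h1, ofReal_sqrt_sq h2]
    push_cast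
    ring
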